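/- arXiv:2009.04541 — 5 statements merged into one kernel-verified Lean document; each statement's English description precedes it below -/
import Mathlib

section
/- Let $(X,\mu)$ be a measure space and $0<p<1$. For any countable family of nonnegative measurable functions $(g_j)_j$ one has $\|\sum_j g_j\|_{L^{p,\infty}}^p \le 2^p\big(1+\frac{1}{1-p}\big)\sum_j \|g_j\|_{L^{p,\infty}}^p$. -/
/-!
Fix a level `t` and put `c = t/2`. If `∑ⱼ gⱼ(x) > t` then either some `gⱼ(x) > c`, or all
`gⱼ(x) ≤ c` and the truncated sum `∑ⱼ min(gⱼ(x), c)` exceeds `c`. The first set is controlled by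
the weak-type (Chebyshev) bound `c^p μ{gⱼ > c} ≤ ‖gⱼ‖^p`, the second by Markov's inequality
together with the layer-cake estimate `∫ min(gⱼ, c) ≤ ∫₀^c ‖gⱼ‖^p s^{-p} ds = ‖gⱼ‖^p c^{1-p}/(1-p)`,
which is where `p < 1` enters.
-/

open MeasureTheory ENNReal Set

/-- The weak `L^p` quasinorm `‖g‖_{L^{p,∞}} = sup_{t>0} t · μ{x : g(x) > t}^{1/p}`
for an `ℝ≥0∞`-valued function. -/
noncomputable def weakLpNorm {X : Type*} [MeasurableSpace X] (μ : Measure X) (p : ℝ)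
    (g : X → ℝ≥0∞) : ℝ≥0∞ :=
  ⨆ (t : ℝ) (_ : 0 < t), ENNReal.ofReal t * μ {x | ENNReal.ofReal t < g x} ^ (1 / p)

theorem setOf_lt_tsum_subset {X ι : Type*} (g : ι → X → ℝ≥0∞) (c : ℝ≥0∞) :
    {x | c < ∑' j, g j x} ⊆ {x | c < ∑' j, min (g j x) c} ∪ ⋃ j, {x | c < g j x} := by
  intro x hx
  by_contra hout
  simp only [mem_union, mem_iUnion, mem_ofPred_eq, not_or, not_exists, not_lt] at hout
  obtain ⟨hsum, hle⟩ := hout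
  simp only [min_eq_left (hle _)] at hsum
  exact hsum.not_gt hx

section WeakLp

variable {X ι : Type*} [MeasurableSpace X] {μ : Measure X} {p : ℝ}

theorem weakLpNorm_rpow_le_iff (hp : 0 < p) (g : X → ℝ≥0∞) (C : ℝ≥0∞) :
    weakLpNorm μ p g ^ p ≤ C ↔
      ∀ t : ℝ, 0 < t → ENNReal.ofReal t ^ p * μ {x | ENNReal.ofReal t < g x} ≤ C := by
  rw [← ENNReal.le_rpow_inv_iff hp, weakLpNorm, iSup₂_le_iff]
  refine forall₂_congr fun t _ => ?_
  rw [ENNReal.le_rpow_inv_iff hp, ENNReal.mul_rpow_of_nonneg _ _ hp.le, ← ENNReal.rpow_mul,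
    one_div_mul_cancel hp.ne', ENNReal.rpow_one]

theorem rpow_mul_measure_lt_le_weakLpNorm_rpow (hp : 0 < p) (g : X → ℝ≥0∞) {t : ℝ}
    (ht : 0 < t) :
    ENNReal.ofReal t ^ p * μ {x | ENNReal.ofReal t < g x} ≤ weakLpNorm μ p g ^ p :=
  (weakLpNorm_rpow_le_iff hp g _).1 le_rfl t ht

theorem measure_lt_le_weakLpNorm_rpow_mul (hp : 0 < p) (g : X → ℝ≥0∞) {t : ℝ} (ht : 0 < t) :
    μ {x | ENNReal.ofReal t < g x} ≤ weakLpNorm μ p g ^ p * ENNReal.ofReal t ^ (-p) := by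
  rw [ENNReal.rpow_neg, ← div_eq_mul_inv, ENNReal.le_div_iff_mul_le, mul_comm]
  · exact rpow_mul_measure_lt_le_weakLpNorm_rpow hp g ht
  · exact Or.inl (ENNReal.rpow_pos (ofReal_pos.2 ht) ofReal_ne_top).ne'
  · exact Or.inl (ENNReal.rpow_ne_top_of_nonneg hp.le ofReal_ne_top)

theorem lintegral_min_ofReal_eq_setLIntegral_measure_lt {g : X → ℝ≥0∞} (hg : Measurable g)
    {u : ℝ} (hu : 0 < u) :
    ∫⁻ x, min (g x) (ENNReal.ofReal u) ∂μ = ∫⁻ s in Ioo 0 u, μ {x | ENNReal.ofReal s < g x} := by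
  set f : X → ℝ := fun x => (min (g x) (ENNReal.ofReal u)).toReal
  have hf : ∀ x, ENNReal.ofReal (f x) = min (g x) (ENNReal.ofReal u) := fun x =>
    ENNReal.ofReal_toReal (ne_top_of_le_ne_top ofReal_ne_top (min_le_right _ _))
  have hlevel : ∀ s ∈ Ioi (0 : ℝ), μ {x | s < f x} =
      (Ioo 0 u).indicator (fun s => μ {x | ENNReal.ofReal s < g x}) s := by
    intro s (hs : 0 < s)
    have hset : {x | s < f x} = {x | ENNReal.ofReal s < g x ∧ s < u} := by
      ext x
      rw [mem_ofPred_eq, mem_ofPred_eq, ← ENNReal.ofReal_lt_ofReal_iff_of_nonneg hs.le, hf,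
        lt_min_iff, ENNReal.ofReal_lt_ofReal_iff hu]
    by_cases hsu : s < u <;> simp [hset, hsu, hs]
  calc ∫⁻ x, min (g x) (ENNReal.ofReal u) ∂μ = ∫⁻ x, ENNReal.ofReal (f x) ∂μ := by simp only [hf]
    _ = ∫⁻ s in Ioi 0, μ {x | s < f x} :=
      lintegral_eq_lintegral_meas_lt μ (ae_of_all _ fun _ => ENNReal.toReal_nonneg)
        (hg.min measurable_const).ennreal_toReal.aemeasurable
    _ = ∫⁻ s in Ioi 0, (Ioo 0 u).indicator (fun s => μ {x | ENNReal.ofReal s < g x}) s :=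
      setLIntegral_congr_fun measurableSet_Ioi hlevel
    _ = ∫⁻ s in Ioo 0 u, μ {x | ENNReal.ofReal s < g x} := by
      rw [lintegral_indicator measurableSet_Ioo, Measure.restrict_restrict measurableSet_Ioo,
        inter_eq_self_of_subset_left Ioo_subset_Ioi_self]

theorem lintegral_Ioo_ofReal_rpow {r : ℝ} (hr : -1 < r) {u : ℝ} (hu : 0 ≤ u) :
    ∫⁻ s in Ioo 0 u, ENNReal.ofReal s ^ r = ENNReal.ofReal (u ^ (r + 1) / (r + 1)) := by
  have hint : IntegrableOn (fun s : ℝ => s ^ r) (Ioo 0 u) := by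
    have := intervalIntegral.intervalIntegrable_rpow' (a := 0) (b := u) hr
    rw [intervalIntegrable_iff_integrableOn_Ioc_of_le hu] at this
    exact this.mono_set Ioo_subset_Ioc_self
  rw [setLIntegral_congr_fun measurableSet_Ioo fun s hs => ENNReal.ofReal_rpow_of_pos hs.1,
    ← ofReal_integral_eq_lintegral_ofReal hint
      ((ae_restrict_mem measurableSet_Ioo).mono fun s hs => Real.rpow_nonneg hs.1.le r),
    ← integral_Ioc_eq_integral_Ioo, ← intervalIntegral.integral_of_le hu,
    integral_rpow (Or.inl hr), Real.zero_rpow (by linarith), sub_zero]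

theorem lintegral_min_ofReal_le (hp0 : 0 < p) (hp1 : p < 1) {g : X → ℝ≥0∞} (hg : Measurable g)
    {u : ℝ} (hu : 0 < u) :
    ∫⁻ x, min (g x) (ENNReal.ofReal u) ∂μ ≤
      ENNReal.ofReal (1 / (1 - p)) * ENNReal.ofReal u ^ (1 - p) * weakLpNorm μ p g ^ p := by
  calc ∫⁻ x, min (g x) (ENNReal.ofReal u) ∂μ
      = ∫⁻ s in Ioo 0 u, μ {x | ENNReal.ofReal s < g x} :=
        lintegral_min_ofReal_eq_setLIntegral_measure_lt hg hu
    _ ≤ ∫⁻ s in Ioo 0 u, weakLpNorm μ p g ^ p * ENNReal.ofReal s ^ (-p) :=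
        setLIntegral_mono' measurableSet_Ioo fun s hs =>
          measure_lt_le_weakLpNorm_rpow_mul hp0 g hs.1
    _ = weakLpNorm μ p g ^ p * ENNReal.ofReal (u ^ (1 - p) / (1 - p)) := by
        rw [lintegral_const_mul _ (by fun_prop), lintegral_Ioo_ofReal_rpow (by linarith) hu.le,
          neg_add_eq_sub]
    _ = _ := by
        rw [div_eq_mul_one_div, ENNReal.ofReal_mul (by positivity),
          ENNReal.ofReal_rpow_of_pos hu]
        ring

theorem rpow_mul_measure_lt_tsum_min_le [Countable ι] (hp0 : 0 < p) (hp1 : p < 1)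
    (g : ι → X → ℝ≥0∞) (hg : ∀ j, Measurable (g j)) {u : ℝ} (hu : 0 < u) :
    ENNReal.ofReal u ^ p * μ {x | ENNReal.ofReal u < ∑' j, min (g j x) (ENNReal.ofReal u)} ≤
      ENNReal.ofReal (1 / (1 - p)) * ∑' j, weakLpNorm μ p (g j) ^ p := by
  set c := ENNReal.ofReal u
  set k := ENNReal.ofReal (1 / (1 - p))
  set A := ∑' j, weakLpNorm μ p (g j) ^ p
  have hc0 : c ≠ 0 := (ofReal_pos.2 hu).ne'
  have hmarkov : c * μ {x | c < ∑' j, min (g j x) c} ≤ k * c ^ (1 - p) * A :=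
    calc c * μ {x | c < ∑' j, min (g j x) c}
        ≤ c * μ {x | c ≤ ∑' j, min (g j x) c} := by
          gcongr with x
          exact le_of_lt
      _ ≤ ∫⁻ x, ∑' j, min (g j x) c ∂μ :=
          mul_meas_ge_le_lintegral₀ (by fun_prop) c
      _ = ∑' j, ∫⁻ x, min (g j x) c ∂μ :=
          lintegral_tsum fun j => ((hg j).min measurable_const).aemeasurable
      _ ≤ ∑' j, k * c ^ (1 - p) * weakLpNorm μ p (g j) ^ p :=
          ENNReal.tsum_le_tsum fun j => lintegral_min_ofReal_le hp0 hp1 (hg j) hu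
      _ = k * c ^ (1 - p) * A := ENNReal.tsum_mul_left
  have hsplit : ∀ a b : ℝ, c ^ (a + b) = c ^ a * c ^ b := fun a b =>
    ENNReal.rpow_add a b hc0 ofReal_ne_top
  calc c ^ p * μ {x | c < ∑' j, min (g j x) c}
      = c ^ (p - 1) * (c * μ {x | c < ∑' j, min (g j x) c}) := by
        conv_lhs => rw [← sub_add_cancel p 1, hsplit, ENNReal.rpow_one]
        rw [mul_assoc]
    _ ≤ c ^ (p - 1) * (k * c ^ (1 - p) * A) := by gcongr
    _ = c ^ ((p - 1) + (1 - p)) * (k * A) := by rw [hsplit]; ring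
    _ = k * A := by simp

theorem rpow_mul_measure_lt_tsum_le [Countable ι] (hp0 : 0 < p) (hp1 : p < 1)
    (g : ι → X → ℝ≥0∞) (hg : ∀ j, Measurable (g j)) {u : ℝ} (hu : 0 < u) :
    ENNReal.ofReal u ^ p * μ {x | ENNReal.ofReal u < ∑' j, g j x} ≤
      (ENNReal.ofReal (1 / (1 - p)) + 1) * ∑' j, weakLpNorm μ p (g j) ^ p := by
  set c := ENNReal.ofReal u
  have hcover : μ {x | c < ∑' j, g j x} ≤
      μ {x | c < ∑' j, min (g j x) c} + ∑' j, μ {x | c < g j x} :=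
    (measure_mono (setOf_lt_tsum_subset g c)).trans
      ((measure_union_le _ _).trans (add_le_add le_rfl (measure_iUnion_le _)))
  calc c ^ p * μ {x | c < ∑' j, g j x}
      ≤ c ^ p * μ {x | c < ∑' j, min (g j x) c} + ∑' j, c ^ p * μ {x | c < g j x} := by
        rw [ENNReal.tsum_mul_left, ← mul_add]
        gcongr
    _ ≤ ENNReal.ofReal (1 / (1 - p)) * ∑' j, weakLpNorm μ p (g j) ^ p +
          ∑' j, weakLpNorm μ p (g j) ^ p :=
        add_le_add (rpow_mul_measure_lt_tsum_min_le hp0 hp1 g hg hu)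
          (ENNReal.tsum_le_tsum fun j => rpow_mul_measure_lt_le_weakLpNorm_rpow hp0 (g j) hu)
    _ = _ := by ring

end WeakLp

/-- Quasi-triangle inequality for weak `L^p`, `0 < p < 1`:
`‖∑ⱼ gⱼ‖_{p,∞}^p ≤ 2^p (1 + 1/(1-p)) ∑ⱼ ‖gⱼ‖_{p,∞}^p`. -/
theorem weakLp_tsum_le {X : Type*} [MeasurableSpace X] (μ : Measure X) (p : ℝ)
    (hp0 : 0 < p) (hp1 : p < 1) (g : ℕ → X → ℝ≥0∞) (hg : ∀ j, Measurable (g j)) :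
    weakLpNorm μ p (fun x => ∑' j, g j x) ^ p ≤
      ENNReal.ofReal (2 ^ p * (1 + 1 / (1 - p))) * ∑' j, weakLpNorm μ p (g j) ^ p := by
  rw [weakLpNorm_rpow_le_iff hp0]
  intro t ht
  have hhalf : ENNReal.ofReal t = ENNReal.ofReal 2 * ENNReal.ofReal (t / 2) := by
    rw [← ENNReal.ofReal_mul zero_le_two, mul_div_cancel₀ t two_ne_zero]
  calc ENNReal.ofReal t ^ p * μ {x | ENNReal.ofReal t < ∑' j, g j x}
      ≤ ENNReal.ofReal t ^ p * μ {x | ENNReal.ofReal (t / 2) < ∑' j, g j x} := by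
        gcongr
        exact half_le_self ht.le
    _ = ENNReal.ofReal 2 ^ p *
          (ENNReal.ofReal (t / 2) ^ p * μ {x | ENNReal.ofReal (t / 2) < ∑' j, g j x}) := by
        rw [hhalf, ENNReal.mul_rpow_of_nonneg _ _ hp0.le, mul_assoc]
    _ ≤ ENNReal.ofReal 2 ^ p *
          ((ENNReal.ofReal (1 / (1 - p)) + 1) * ∑' j, weakLpNorm μ p (g j) ^ p) :=
        mul_le_mul_right (rpow_mul_measure_lt_tsum_le hp0 hp1 g hg (half_pos ht)) _
    _ = _ := by
        rw [ENNReal.ofReal_mul (by positivity), ENNReal.ofReal_rpow_of_pos two_pos,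
          ENNReal.ofReal_add zero_le_one (one_div_pos.2 (sub_pos.2 hp1)).le,
          ENNReal.ofReal_one]
        ring
end

section
/- Let $I$ be a linearly ordered set and $(a_t)_{t\in I}$ complex numbers, $r>2$. If every individual jump in any finite increasing sequence is at most $1$ (i.e. $|a_s - a_t|\le 1$ for all $s<t$ consecutive in any chosen partition contributing to the variation), then the $r$-variation satisfies $(V^r)^r \lesssim \sum_{l\ge 0} 2^{-lr}\, N_{2^{-l}}$, where $N_\lambda$ is the $\lambda$-jump counting function. -/
open ENNReal

/-- Homogeneous `r`-variation seminorm of a family `(a_t)_{t ∈ I}` over a linear order. -/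
noncomputable def evar {I : Type*} [LinearOrder I] {E : Type*} [SeminormedAddCommGroup E]
    (r : ℝ) (a : I → E) : ℝ≥0∞ :=
  ⨆ (J : ℕ) (t : ℕ → I) (_ : ∀ i < J, t i < t (i + 1)),
    (∑ j ∈ Finset.range J, ENNReal.ofReal (‖a (t (j + 1)) - a (t j)‖ ^ r)) ^ (1 / r)

/-- The `λ`-jump counting function of `(a_t)_{t ∈ I}`. -/
noncomputable def jumpCount {I : Type*} [LinearOrder I] {E : Type*} [SeminormedAddCommGroup E]
    (lam : ℝ) (a : I → E) : ℝ≥0∞ :=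
  ⨆ (J : ℕ) (_ : ∃ t : ℕ → I, (∀ i < J, t i < t (i + 1)) ∧
      ∀ i < J, lam < ‖a (t (i + 1)) - a (t i)‖), (J : ℝ≥0∞)

/-- A finite chain is monotone. -/
lemma chain_mono {I : Type} [LinearOrder I] (t : ℕ → I) (J : ℕ)
    (ht : ∀ i < J, t i < t (i + 1)) : ∀ i j, i ≤ j → j ≤ J → t i ≤ t j := by
  intro i j hij
  induction j, hij using Nat.le_induction with
  | base => intro _; exact le_rfl
  | succ j hij ih => intro hj; exact le_trans (ih (by omega)) (le_of_lt (ht j (by omega)))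

/-- Greedy selection: from `m` disjoint jumps of size `> lam` one can build a chain of `m`
consecutive jumps each of size `> lam / 2`. -/
lemma greedy {I : Type} [LinearOrder I] (a : I → ℂ) (lam : ℝ) (hlam : 0 < lam)
    (m : ℕ) (u v : ℕ → I)
    (h1 : ∀ i < m, u i < v i)
    (h2 : ∀ i, i + 1 < m → v i ≤ u (i + 1))
    (h3 : ∀ i < m, lam < ‖a (v i) - a (u i)‖) :
    ∃ s : ℕ → I, (∀ i < m, s i < s (i + 1)) ∧
      ∀ i < m, lam / 2 < ‖a (s (i + 1)) - a (s i)‖ := by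
  classical
  let s : ℕ → I := fun n => Nat.rec (motive := fun _ => I) (u 0)
    (fun n prev => if prev < u n ∧ lam / 2 < ‖a (u n) - a prev‖ then u n else v n) n
  have hs : ∀ n, s (n + 1) =
      if s n < u n ∧ lam / 2 < ‖a (u n) - a (s n)‖ then u n else v n := fun n => rfl
  have key : ∀ n, n < m → s n ≤ u n ∧ s n < s (n + 1) ∧ s (n + 1) ≤ v n ∧
      lam / 2 < ‖a (s (n + 1)) - a (s n)‖ := by
    intro n
    induction n with
    | zero =>
      intro h0
      have hs0 : s 0 = u 0 := rfl
      have hcond : ¬ (s 0 < u 0 ∧ lam / 2 < ‖a (u 0) - a (s 0)‖) := by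
        rw [hs0]; rintro ⟨h, -⟩; exact lt_irrefl _ h
      rw [hs 0, if_neg hcond, hs0]
      exact ⟨le_rfl, h1 0 h0, le_rfl, lt_trans (by linarith) (h3 0 h0)⟩
    | succ n ih =>
      intro hn1
      have hn : n < m := Nat.lt_of_succ_lt hn1
      obtain ⟨-, -, hsv, -⟩ := ih hn
      have hle : s (n + 1) ≤ u (n + 1) := hsv.trans (h2 n hn1)
      by_cases c : s (n + 1) < u (n + 1) ∧ lam / 2 < ‖a (u (n + 1)) - a (s (n + 1))‖
      · rw [hs (n + 1), if_pos c]
        exact ⟨hle, c.1, le_of_lt (h1 (n + 1) hn1), c.2⟩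
      · rw [hs (n + 1), if_neg c]
        refine ⟨hle, lt_of_le_of_lt hle (h1 (n + 1) hn1), le_rfl, ?_⟩
        rcases eq_or_lt_of_le hle with heq | hlt
        · rw [heq]; exact lt_trans (by linarith) (h3 (n + 1) hn1)
        · have hsmall : ‖a (u (n + 1)) - a (s (n + 1))‖ ≤ lam / 2 := by
            by_contra hbig
            push_neg at hbig
            exact c ⟨hlt, hbig⟩
          have htri : ‖a (v (n + 1)) - a (u (n + 1))‖ ≤
              ‖a (v (n + 1)) - a (s (n + 1))‖ + ‖a (u (n + 1)) - a (s (n + 1))‖ := by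
            have h := norm_sub_le (a (v (n + 1)) - a (s (n + 1)))
              (a (u (n + 1)) - a (s (n + 1)))
            rwa [sub_sub_sub_cancel_right] at h
          have hj := h3 (n + 1) hn1
          linarith
  refine ⟨s, fun i hi => (key i hi).2.1, fun i hi => (key i hi).2.2.2⟩

/-- The number of disjoint jumps of size `> lam` along a chain is at most the
`lam / 2`-jump count. -/
lemma card_le_jumpCount {I : Type} [LinearOrder I] (a : I → ℂ) (lam : ℝ) (hlam : 0 < lam)
    (J : ℕ) (t : ℕ → I) (ht : ∀ i < J, t i < t (i + 1))
    (B : Finset ℕ) (hBJ : ∀ j ∈ B, j < J)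
    (hBbig : ∀ j ∈ B, lam < ‖a (t (j + 1)) - a (t j)‖) :
    (B.card : ℝ≥0∞) ≤ jumpCount (lam / 2) a := by
  classical
  set m := B.card with hm
  let e : Fin m ↪o ℕ := B.orderEmbOfFin hm.symm
  have hem : ∀ i : Fin m, e i ∈ B := fun i => B.orderEmbOfFin_mem hm.symm i
  have heJ : ∀ i : Fin m, e i < J := fun i => hBJ _ (hem i)
  let u : ℕ → I := fun n => if h : n < m then t (e ⟨n, h⟩) else t 0
  let v : ℕ → I := fun n => if h : n < m then t (e ⟨n, h⟩ + 1) else t 0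
  have h1 : ∀ i < m, u i < v i := by
    intro i hi
    simp only [u, v, dif_pos hi]
    exact ht _ (heJ _)
  have h2 : ∀ i, i + 1 < m → v i ≤ u (i + 1) := by
    intro i hi1
    have hi : i < m := by omega
    simp only [u, v, dif_pos hi, dif_pos hi1]
    have hlt : e ⟨i, hi⟩ < e ⟨i + 1, hi1⟩ := e.strictMono (by simp [Fin.mk_lt_mk])
    exact chain_mono t J ht _ _ (by omega) (le_of_lt (heJ _))
  have h3 : ∀ i < m, lam < ‖a (v i) - a (u i)‖ := by
    intro i hi
    simp only [u, v, dif_pos hi]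
    exact hBbig _ (hem _)
  obtain ⟨s, hs1, hs2⟩ := greedy a lam hlam m u v h1 h2 h3
  rw [jumpCount]
  refine le_trans ?_ (le_iSup _ m)
  exact le_iSup (fun _ : (∃ t : ℕ → I, (∀ i < m, t i < t (i + 1)) ∧
    ∀ i < m, lam / 2 < ‖a (t (i + 1)) - a (t i)‖) => (m : ℝ≥0∞)) ⟨s, hs1, hs2⟩

/-- For `r > 2` and families all of whose increments are bounded by `1`, the dyadic
decomposition bound `(V^r)^r ≲_r ∑_{l ≥ 0} 2^{-lr} N_{2^{-l}}` holds with a constant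
depending only on `r`. -/
theorem variation_le_dyadic_jumps (r : ℝ) (hr : 2 < r) :
    ∃ C : ℝ≥0∞, C ≠ ⊤ ∧
      ∀ (I : Type) [LinearOrder I] (a : I → ℂ),
        (∀ s t : I, ‖a s - a t‖ ≤ 1) →
        evar r a ^ r ≤
          C * ∑' l : ℕ, ENNReal.ofReal ((2 : ℝ) ^ (-(l : ℝ) * r)) *
            jumpCount ((2 : ℝ) ^ (-(l : ℝ))) a := by
  classical
  have hr0 : (0 : ℝ) < r := by linarith
  have hrne : r ≠ 0 := ne_of_gt hr0
  refine ⟨ENNReal.ofReal ((2 : ℝ) ^ (2 * r)), ENNReal.ofReal_ne_top, ?_⟩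
  intro I _ a hbd
  set g : ℕ → ℝ≥0∞ := fun l => ENNReal.ofReal ((2 : ℝ) ^ (-(l : ℝ) * r)) *
    jumpCount ((2 : ℝ) ^ (-(l : ℝ))) a with hg
  set C : ℝ≥0∞ := ENNReal.ofReal ((2 : ℝ) ^ (2 * r)) with hC
  have main : evar r a ≤ (C * ∑' l : ℕ, g l) ^ (1 / r) := by
    rw [evar]
    refine iSup_le fun J => iSup_le fun t => iSup_le fun ht => ?_
    refine ENNReal.rpow_le_rpow ?_ (by positivity)
    -- notation
    set Δ : ℕ → ℂ := fun j => a (t (j + 1)) - a (t j) with hΔ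
    set F : ℕ → ℝ≥0∞ := fun j => ENNReal.ofReal (‖Δ j‖ ^ r) with hF
    set pos : Finset ℕ := (Finset.range J).filter (fun j => Δ j ≠ 0) with hpos
    have hS : ∑ j ∈ Finset.range J, F j = ∑ j ∈ pos, F j := by
      rw [hpos]
      refine (Finset.sum_filter_of_ne ?_).symm
      intro j _ hFj hΔ0
      apply hFj
      simp [hF, hΔ0, Real.zero_rpow hrne]
    -- bucket function
    have hex : ∀ j ∈ pos, ∃ l : ℕ, (2 : ℝ) ^ (-((l : ℝ) + 1)) < ‖Δ j‖ := by
      intro j hj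
      have hne : Δ j ≠ 0 := (Finset.mem_filter.mp hj).2
      have hposn : 0 < ‖Δ j‖ := norm_pos_iff.mpr hne
      obtain ⟨n, hn⟩ := exists_pow_lt_of_lt_one hposn (by norm_num : (1 / 2 : ℝ) < 1)
      refine ⟨n, lt_of_le_of_lt ?_ hn⟩
      have h12 : ((1 : ℝ) / 2) ^ n = (2 : ℝ) ^ (-(n : ℝ)) := by
        rw [one_div, inv_pow, ← Real.rpow_natCast (2 : ℝ) n,
          ← Real.rpow_neg (by norm_num : (0 : ℝ) ≤ 2)]
      rw [h12]
      exact Real.rpow_le_rpow_of_exponent_le (by norm_num) (by linarith)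
    let lj : ℕ → ℕ := fun j =>
      if h : ∃ l : ℕ, (2 : ℝ) ^ (-((l : ℝ) + 1)) < ‖Δ j‖ then Nat.find h else 0
    have hlow : ∀ j ∈ pos, (2 : ℝ) ^ (-((lj j : ℝ) + 1)) < ‖Δ j‖ := by
      intro j hj
      have h := hex j hj
      simp only [lj, dif_pos h]
      exact Nat.find_spec h
    have hup : ∀ j ∈ pos, ‖Δ j‖ ≤ (2 : ℝ) ^ (-(lj j : ℝ)) := by
      intro j hj
      have h := hex j hj
      simp only [lj, dif_pos h]
      rcases Nat.eq_zero_or_pos (Nat.find h) with h0 | hk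
      · rw [h0]
        simpa using hbd (t (j + 1)) (t j)
      · have hmin := Nat.find_min h (m := Nat.find h - 1) (by omega)
        push_neg at hmin
        have hexp : -(((Nat.find h - 1 : ℕ) : ℝ) + 1) = -((Nat.find h : ℕ) : ℝ) := by
          rw [Nat.cast_sub (by omega : 1 ≤ Nat.find h)]
          push_cast
          ring
        calc ‖Δ j‖ ≤ (2 : ℝ) ^ (-(((Nat.find h - 1 : ℕ) : ℝ) + 1)) := hmin
          _ = (2 : ℝ) ^ (-((Nat.find h : ℕ) : ℝ)) := by rw [hexp]
    -- grouping
    set L : ℕ := (pos.sup lj) + 1 with hL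
    have hmaps : ∀ j ∈ pos, lj j ∈ Finset.range L := by
      intro j hj
      exact Finset.mem_range.mpr (by have := Finset.le_sup (f := lj) hj; omega)
    have hgroup : ∑ j ∈ pos, F j =
        ∑ l ∈ Finset.range L, ∑ j ∈ pos.filter (fun j => lj j = l), F j :=
      (Finset.sum_fiberwise_of_maps_to hmaps F).symm
    -- per-bucket bound
    have hbucket : ∀ l : ℕ, ∑ j ∈ pos.filter (fun j => lj j = l), F j ≤
        C * g (l + 2) := by
      intro l
      set Bl : Finset ℕ := pos.filter (fun j => lj j = l) with hBl
      have hcard : ∑ j ∈ Bl, F j ≤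
          (Bl.card : ℝ≥0∞) * ENNReal.ofReal ((2 : ℝ) ^ (-(l : ℝ) * r)) := by
        have hbound : ∀ j ∈ Bl, F j ≤ ENNReal.ofReal ((2 : ℝ) ^ (-(l : ℝ) * r)) := by
          intro j hj
          have hjpos : j ∈ pos := (Finset.mem_filter.mp hj).1
          have hjl : lj j = l := (Finset.mem_filter.mp hj).2
          have h1 : ‖Δ j‖ ^ r ≤ ((2 : ℝ) ^ (-(l : ℝ))) ^ r := by
            refine Real.rpow_le_rpow (norm_nonneg _) ?_ (le_of_lt hr0)
            rw [← hjl]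
            exact hup j hjpos
          have h2 : ((2 : ℝ) ^ (-(l : ℝ))) ^ r = (2 : ℝ) ^ (-(l : ℝ) * r) :=
            (Real.rpow_mul (by norm_num) _ _).symm
          exact ENNReal.ofReal_le_ofReal (by rw [← h2]; exact h1)
        calc ∑ j ∈ Bl, F j ≤ Bl.card • ENNReal.ofReal ((2 : ℝ) ^ (-(l : ℝ) * r)) :=
              Finset.sum_le_card_nsmul _ _ _ hbound
          _ = (Bl.card : ℝ≥0∞) * ENNReal.ofReal ((2 : ℝ) ^ (-(l : ℝ) * r)) := by
              rw [nsmul_eq_mul]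
      have hcardjump : (Bl.card : ℝ≥0∞) ≤ jumpCount ((2 : ℝ) ^ (-((l : ℝ) + 2))) a := by
        have hhalf : (2 : ℝ) ^ (-((l : ℝ) + 1)) / 2 = (2 : ℝ) ^ (-((l : ℝ) + 2)) := by
          rw [show (-((l : ℝ) + 1)) = (-((l : ℝ) + 2)) + 1 by ring,
            Real.rpow_add (by norm_num : (0 : ℝ) < 2), Real.rpow_one]
          ring
        rw [← hhalf]
        refine card_le_jumpCount a ((2 : ℝ) ^ (-((l : ℝ) + 1)))
          (Real.rpow_pos_of_pos (by norm_num) _) J t ht Bl ?_ ?_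
        · intro j hj
          exact Finset.mem_range.mp (Finset.mem_filter.mp (Finset.mem_filter.mp hj).1).1
        · intro j hj
          have hjl : lj j = l := (Finset.mem_filter.mp hj).2
          have := hlow j (Finset.mem_filter.mp hj).1
          rwa [hjl] at this
      have hsplit : ENNReal.ofReal ((2 : ℝ) ^ (-(l : ℝ) * r)) =
          C * ENNReal.ofReal ((2 : ℝ) ^ (-((l : ℝ) + 2) * r)) := by
        rw [hC, ← ENNReal.ofReal_mul (by positivity)]
        congr 1
        rw [← Real.rpow_add (by norm_num : (0 : ℝ) < 2)]
        ring_nf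
      have hgl2 : g (l + 2) = ENNReal.ofReal ((2 : ℝ) ^ (-((l : ℝ) + 2) * r)) *
          jumpCount ((2 : ℝ) ^ (-((l : ℝ) + 2))) a := by
        have hc : (((l + 2 : ℕ) : ℝ)) = (l : ℝ) + 2 := by push_cast; ring
        simp only [hg, hc]
      calc ∑ j ∈ Bl, F j
          ≤ (Bl.card : ℝ≥0∞) * ENNReal.ofReal ((2 : ℝ) ^ (-(l : ℝ) * r)) := hcard
        _ ≤ jumpCount ((2 : ℝ) ^ (-((l : ℝ) + 2))) a *
            ENNReal.ofReal ((2 : ℝ) ^ (-(l : ℝ) * r)) :=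
            mul_le_mul_left hcardjump _
        _ = C * g (l + 2) := by
            rw [hsplit, hgl2]; ring
    -- assemble
    calc ∑ j ∈ Finset.range J, F j
        = ∑ l ∈ Finset.range L, ∑ j ∈ pos.filter (fun j => lj j = l), F j := by
          rw [hS, hgroup]
      _ ≤ ∑ l ∈ Finset.range L, C * g (l + 2) := Finset.sum_le_sum fun l _ => hbucket l
      _ = C * ∑ l ∈ Finset.range L, g (l + 2) := by rw [Finset.mul_sum]
      _ ≤ C * ∑' l : ℕ, g (l + 2) := mul_le_mul_right (ENNReal.sum_le_tsum _) _
      _ ≤ C * ∑' l : ℕ, g l := by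
          refine mul_le_mul_right ?_ _
          exact ENNReal.tsum_comp_le_tsum_of_injective (add_left_injective 2) g
  calc evar r a ^ r ≤ ((C * ∑' l : ℕ, g l) ^ (1 / r)) ^ r :=
        ENNReal.rpow_le_rpow main (le_of_lt hr0)
    _ = C * ∑' l : ℕ, g l := by
        rw [← ENNReal.rpow_mul, one_div, inv_mul_cancel₀ hrne, ENNReal.rpow_one]
end

section
/- Let $(T_k)_{k\in\mathbb{Z}}$ be bounded operators on a Hilbert space $H$ satisfying $\|T_{k'}^* T_k\| + \|T_{k'} T_k^*\| \le C\, 2^{-\epsilon|k-k'|}$ for some $\epsilon>0$ and all $k,k'$. Then for every finite subset $F\subset\mathbb{Z}$, $\|\sum_{k\in F} T_k\| \le C' $ with $C'$ depending only on $C$ and $\epsilon$ (Cotlar–Stein almost orthogonality). -/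
/-!
Power trick. For `S = ∑_{k ∈ F} Tₖ` we have `‖S‖^(2N) = ‖(S⋆S)^N‖`, and `(S⋆S)^N` expands into
words `u₀ u₁ ⋯ u_{2N-1}` whose letters alternate between `T⋆ₖ` and `Tₖ`, so that every adjacent
product is of the form `T⋆ⱼ Tₖ` or `Tⱼ T⋆ₖ`. Grouping a word into adjacent pairs in the two possible
ways and taking the geometric mean of the two bounds gives `‖u₀ ⋯ uₙ‖ ≤ E ∏ᵢ √‖uᵢ uᵢ₊₁‖` as soon as
`‖u₀‖, ‖uₙ‖ ≤ E`. If all row sums `∑ₖ √‖T⋆ⱼ Tₖ‖` and `∑ₖ √‖Tⱼ T⋆ₖ‖` are at most `E`, summing these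
path weights one letter at a time gives `‖S‖^(2N) ≤ #F · E^(2N)`, and `N → ∞` yields `‖S‖ ≤ E`.
For the weights `C 2^(-ε|k-k'|)` the row sums are at most `√C ∑_{n ∈ ℤ} 2^(-ε|n|/2)`.
-/

open Finset Filter Topology

theorem List.prod_range_update_succ {ι M : Type*} [Monoid M] (U : ℕ → ι → M) (k : ℕ → ι) (n : ℕ)
    (y : ι) : ((List.range (n + 2)).map fun i => U i (Function.update k (n + 1) y i)).prod =
      ((List.range (n + 1)).map fun i => U i (k i)).prod * U (n + 1) y := by
  rw [List.prod_range_succ, Function.update_self]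
  congr 2
  refine List.map_congr_left fun i hi => ?_
  rw [Function.update_of_ne (by simp at hi; omega)]

theorem Finset.prod_range_update_succ {ι M : Type*} [CommMonoid M] (g : ℕ → ι → ι → M) (k : ℕ → ι)
    (n : ℕ) (y : ι) :
    ∏ i ∈ range (n + 1), g i (Function.update k (n + 1) y i) (Function.update k (n + 1) y (i + 1)) =
      (∏ i ∈ range n, g i (k i) (k (i + 1))) * g n (k n) y := by
  rw [prod_range_succ, Function.update_self, Function.update_of_ne (by omega)]
  congr 1
  refine prod_congr rfl fun i hi => ?_
  rw [mem_range] at hi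
  rw [Function.update_of_ne (by omega), Function.update_of_ne (by omega)]

theorem List.prod_range_ite_even {M : Type*} [Monoid M] (a b : M) (N : ℕ) :
    ((List.range (2 * N)).map fun i => if Even i then a else b).prod = (a * b) ^ N := by
  induction N with
  | zero => simp
  | succ N ih =>
    rw [mul_add_one, List.prod_range_succ, List.prod_range_succ, ih, pow_succ, mul_assoc]
    simp

theorem le_of_pow_le_mul_pow {x y K : ℝ} (hy : 0 ≤ y) {n : ℕ → ℕ} (hn : Tendsto n atTop atTop)
    (h : ∀ m, x ^ n m ≤ K * y ^ n m) : x ≤ y := by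
  by_contra! hxy
  have hx : 0 < x := hy.trans_lt hxy
  have hlim : Tendsto (fun m => K * (y / x) ^ n m) atTop (𝓝 0) := by
    simpa using ((tendsto_pow_atTop_nhds_zero_of_lt_one (div_nonneg hy hx.le)
      ((div_lt_one hx).2 hxy)).comp hn).const_mul K
  obtain ⟨m, hm⟩ := (hlim.eventually (gt_mem_nhds one_pos)).exists
  rw [div_pow, ← mul_div_assoc, div_lt_one (by positivity)] at hm
  exact (h m).not_gt hm

section NormedRing

variable {R : Type*} [NormedRing R]

theorem norm_list_prod_range_mul_le (u : ℕ → R) (n : ℕ) :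
    ‖((List.range (n + 2)).map u).prod‖ * ‖((List.range (n + 1)).map fun i => u (i + 1)).prod‖ ≤
      ‖u (n + 1)‖ * ∏ i ∈ range (n + 1), ‖u i * u (i + 1)‖ := by
  induction n generalizing u with
  | zero => simp [List.prod_range_succ, mul_comm]
  | succ n ih =>
    have hpair : ‖((List.range (n + 3)).map u).prod‖ ≤
        ‖u 0 * u 1‖ * ‖((List.range (n + 1)).map fun i => u (i + 2)).prod‖ := by
      rw [List.prod_range_succ' u (n + 2), List.prod_range_succ' (fun i => u i.succ) (n + 1),
        ← mul_assoc]
      exact norm_mul_le _ _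
    calc _ ≤ ‖u 0 * u 1‖ * (‖((List.range (n + 2)).map fun i => u (i + 1)).prod‖ *
            ‖((List.range (n + 1)).map fun i => u (i + 2)).prod‖) := by
          rw [mul_left_comm, mul_comm]
          exact mul_le_mul_of_nonneg_left hpair (norm_nonneg _)
      _ ≤ ‖u 0 * u 1‖ * (‖u (n + 2)‖ * ∏ i ∈ range (n + 1), ‖u (i + 1) * u (i + 2)‖) :=
          mul_le_mul_of_nonneg_left (ih fun i => u (i + 1)) (norm_nonneg _)
      _ = _ := by rw [prod_range_succ' _ (n + 1)]; ring

theorem norm_list_prod_range_sq_le (u : ℕ → R) (n : ℕ) :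
    ‖((List.range (n + 1)).map u).prod‖ ^ 2 ≤
      ‖u 0‖ * ‖u n‖ * ∏ i ∈ range n, ‖u i * u (i + 1)‖ := by
  cases n with
  | zero => simp [sq]
  | succ n =>
    calc _ = ‖((List.range (n + 2)).map u).prod‖ *
          ‖u 0 * ((List.range (n + 1)).map fun i => u (i + 1)).prod‖ := by
          rw [sq, List.prod_range_succ' u (n + 1)]
      _ ≤ ‖u 0‖ * (‖((List.range (n + 2)).map u).prod‖ *
          ‖((List.range (n + 1)).map fun i => u (i + 1)).prod‖) := by
          rw [mul_left_comm]
          exact mul_le_mul_of_nonneg_left (norm_mul_le _ _) (norm_nonneg _)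
      _ ≤ _ := by
          rw [mul_assoc]
          exact mul_le_mul_of_nonneg_left (norm_list_prod_range_mul_le u n) (norm_nonneg _)

theorem norm_list_prod_range_le {u : ℕ → R} {n : ℕ} {E : ℝ} (h₀ : ‖u 0‖ ≤ E) (hₙ : ‖u n‖ ≤ E) :
    ‖((List.range (n + 1)).map u).prod‖ ≤ E * ∏ i ∈ range n, √‖u i * u (i + 1)‖ := by
  have hE : 0 ≤ E := (norm_nonneg _).trans h₀
  refine (pow_le_pow_iff_left₀ (norm_nonneg _) (by positivity) two_ne_zero).mp ?_
  rw [mul_pow, ← prod_pow]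
  simp only [Real.sq_sqrt (norm_nonneg _)]
  refine (norm_list_prod_range_sq_le u n).trans ?_
  rw [sq]
  gcongr

variable {ι : Type*} {U : ℕ → ι → R} {s : Finset ι} {E : ℝ}

-- The word indexed by `k` is extended by one letter `y ∈ s` for each of the `t` remaining factors.
theorem norm_list_prod_mul_list_prod_sum_le (hU : ∀ i, ∀ x ∈ s, ‖U i x‖ ≤ E)
    (hrow : ∀ i, ∀ x ∈ s, ∑ y ∈ s, √‖U i x * U (i + 1) y‖ ≤ E) (t : ℕ) :
    ∀ (n : ℕ) (k : ℕ → ι), k 0 ∈ s → k n ∈ s →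
      ‖((List.range (n + 1)).map fun i => U i (k i)).prod *
          ((List.range t).map fun i => ∑ y ∈ s, U (i + (n + 1)) y).prod‖ ≤
        E * (∏ i ∈ range n, √‖U i (k i) * U (i + 1) (k (i + 1))‖) * E ^ t := by
  induction t with
  | zero =>
    intro n k h₀ hₙ
    simpa using norm_list_prod_range_le (hU 0 _ h₀) (hU n _ hₙ)
  | succ t ih =>
    intro n k h₀ hₙ
    have hE : 0 ≤ E := (norm_nonneg _).trans (hU 0 _ h₀)
    have hrest : ((List.range (t + 1)).map fun i => ∑ y ∈ s, U (i + (n + 1)) y).prod =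
        (∑ y ∈ s, U (n + 1) y) * ((List.range t).map fun i => ∑ y ∈ s, U (i + (n + 2)) y).prod := by
      rw [List.prod_range_succ', zero_add]
      congr 3 with i
      rw [Nat.succ_eq_add_one, add_right_comm]
      rfl
    calc _ = ‖∑ y ∈ s,
            ((List.range (n + 2)).map fun i => U i (Function.update k (n + 1) y i)).prod *
              ((List.range t).map fun i => ∑ y ∈ s, U (i + (n + 2)) y).prod‖ := by
          rw [hrest, sum_mul, mul_sum]
          simp only [List.prod_range_update_succ, mul_assoc]
      _ ≤ ∑ y ∈ s, E * ((∏ i ∈ range n, √‖U i (k i) * U (i + 1) (k (i + 1))‖) *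
            √‖U n (k n) * U (n + 1) y‖) * E ^ t := by
          refine norm_sum_le_of_le _ fun y hy => ?_
          rw [← prod_range_update_succ fun i x y => √‖U i x * U (i + 1) y‖]
          exact ih (n + 1) _ (by simp [h₀]) (by simp [hy])
      _ = E * (∏ i ∈ range n, √‖U i (k i) * U (i + 1) (k (i + 1))‖) * E ^ t *
            ∑ y ∈ s, √‖U n (k n) * U (n + 1) y‖ := by
          rw [mul_sum]; exact sum_congr rfl fun y _ => by ring
      _ ≤ _ := by
          rw [pow_succ, ← mul_assoc]
          gcongr
          exact hrow n _ hₙ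

theorem norm_list_prod_range_sum_le (hU : ∀ i, ∀ x ∈ s, ‖U i x‖ ≤ E)
    (hrow : ∀ i, ∀ x ∈ s, ∑ y ∈ s, √‖U i x * U (i + 1) y‖ ≤ E) (n : ℕ) :
    ‖((List.range (n + 1)).map fun i => ∑ y ∈ s, U i y).prod‖ ≤ #s * E ^ (n + 1) := by
  rw [List.prod_range_succ', sum_mul]
  calc _ ≤ ∑ x ∈ s, E * 1 * E ^ n := norm_sum_le_of_le _ fun x hx => by
          simpa using norm_list_prod_mul_list_prod_sum_le hU hrow n 0 (fun _ => x) hx hx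
    _ = _ := by rw [sum_const, nsmul_eq_mul, pow_succ']; ring

end NormedRing

section CStarRing

variable {A ι : Type*} [NormedRing A] [StarRing A] [CStarRing A]

theorem norm_le_sum_sqrt_norm_star_mul (T : ι → A) {s : Finset ι} {j : ι} (hj : j ∈ s) :
    ‖T j‖ ≤ ∑ k ∈ s, √‖star (T j) * T k‖ := by
  calc ‖T j‖ = √‖star (T j) * T j‖ := by
        rw [CStarRing.norm_star_mul_self, Real.sqrt_mul_self (norm_nonneg _)]
    _ ≤ _ := single_le_sum (f := fun k => √‖star (T j) * T k‖) (fun k _ => Real.sqrt_nonneg _) hj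

theorem norm_sum_le_of_sum_sqrt_norm_le (T : ι → A) (s : Finset ι) {E : ℝ} (hE : 0 ≤ E)
    (h₁ : ∀ j ∈ s, ∑ k ∈ s, √‖star (T j) * T k‖ ≤ E)
    (h₂ : ∀ j ∈ s, ∑ k ∈ s, √‖T j * star (T k)‖ ≤ E) :
    ‖∑ k ∈ s, T k‖ ≤ E := by
  set S := ∑ k ∈ s, T k
  set U : ℕ → ι → A := fun i x => if Even i then star (T x) else T x
  have hU : ∀ i, ∀ x ∈ s, ‖U i x‖ ≤ E := fun i x hx => by
    have := (norm_le_sum_sqrt_norm_star_mul T hx).trans (h₁ x hx)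
    by_cases hi : Even i <;> simpa [U, hi] using this
  have hrow : ∀ i, ∀ x ∈ s, ∑ y ∈ s, √‖U i x * U (i + 1) y‖ ≤ E := fun i x hx => by
    by_cases hi : Even i
    · simpa [U, hi, Nat.not_even_iff_odd.2 hi.add_one] using h₁ x hx
    · simpa [U, hi, (Nat.not_even_iff_odd.1 hi).add_one] using h₂ x hx
  have hsum : ∀ i, ∑ y ∈ s, U i y = if Even i then star S else S := fun i => by
    by_cases hi : Even i <;> simp [U, S, hi, star_sum]
  have hpow : ∀ m, ‖S‖ ^ 2 ^ (m + 1) ≤ #s * E ^ 2 ^ (m + 1) := fun m => by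
    obtain ⟨n, hn⟩ : ∃ n, 2 ^ (m + 1) = n + 1 := Nat.exists_eq_add_one.2 (by positivity)
    calc ‖S‖ ^ 2 ^ (m + 1) = ‖(star S * S) ^ 2 ^ m‖ := by
          rw [(IsSelfAdjoint.star_mul_self S).norm_pow_two_pow, CStarRing.norm_star_mul_self,
            ← sq, ← pow_mul, pow_succ']
      _ = ‖((List.range (2 ^ (m + 1))).map fun i => ∑ y ∈ s, U i y).prod‖ := by
          simp_rw [hsum, pow_succ' 2 m, List.prod_range_ite_even]
      _ ≤ #s * E ^ 2 ^ (m + 1) := by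
          rw [hn]
          exact norm_list_prod_range_sum_le hU hrow n
  exact le_of_pow_le_mul_pow hE
    ((tendsto_pow_atTop_atTop_of_one_lt (r := 2) one_lt_two).comp (tendsto_add_atTop_nat 1)) hpow

end CStarRing

theorem summable_pow_natAbs {r : ℝ} (hr₀ : 0 ≤ r) (hr₁ : r < 1) :
    Summable fun n : ℤ => r ^ n.natAbs :=
  .of_nat_of_neg (by simpa using summable_geometric_of_lt_one hr₀ hr₁)
    (by simpa using summable_geometric_of_lt_one hr₀ hr₁)

theorem sum_comp_sub_le_tsum {G : Type*} [AddCommGroup G] {f : G → ℝ} (hf : Summable f)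
    (hf₀ : ∀ n, 0 ≤ f n) (s : Finset G) (j : G) :
    ∑ k ∈ s, f (k - j) ≤ ∑' n, f n :=
  calc ∑ k ∈ s, f (k - j) ≤ ∑' k, f (k - j) :=
        ((Equiv.subRight j).summable_iff.2 hf).sum_le_tsum s fun _ _ => hf₀ _
    _ = ∑' n, f n := (Equiv.subRight j).tsum_eq f

theorem sqrt_rpow_neg_mul_abs {b : ℝ} (hb : 0 ≤ b) (ε : ℝ) (n : ℤ) :
    √(b ^ (-(ε * |(n : ℝ)|))) = (b ^ (-(ε / 2))) ^ n.natAbs := by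
  rw [Real.sqrt_eq_rpow, ← Real.rpow_mul hb, ← Real.rpow_natCast, ← Real.rpow_mul hb,
    Nat.cast_natAbs, Int.cast_abs]
  ring_nf

theorem cotlar_stein_general (C ε : ℝ) (hε : 0 < ε) :
    ∃ C' : ℝ, 0 ≤ C' ∧
      ∀ (H : Type) [NormedAddCommGroup H] [InnerProductSpace ℂ H] [CompleteSpace H]
        (T : ℤ → H →L[ℂ] H),
        (∀ k k' : ℤ,
            ‖ContinuousLinearMap.adjoint (T k') ∘L T k‖ +
              ‖T k' ∘L ContinuousLinearMap.adjoint (T k)‖ ≤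
            C * 2 ^ (-(ε * |(k : ℝ) - (k' : ℝ)|))) →
        ∀ F : Finset ℤ, ‖∑ k ∈ F, T k‖ ≤ C' := by
  set r : ℝ := 2 ^ (-(ε / 2))
  have hr₀ : 0 ≤ r := by positivity
  have hr : Summable fun n : ℤ => r ^ n.natAbs :=
    summable_pow_natAbs hr₀ (Real.rpow_lt_one_of_one_lt_of_neg one_lt_two (by linarith))
  have hC' : 0 ≤ √C * ∑' n : ℤ, r ^ n.natAbs := by positivity
  refine ⟨_, hC', fun H _ _ _ T hT F => ?_⟩
  have hrow : ∀ X : ℤ → ℤ → H →L[ℂ] H,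
      (∀ j k, ‖X j k‖ ≤ C * 2 ^ (-(ε * |(k : ℝ) - (j : ℝ)|))) →
      ∀ j, ∑ k ∈ F, √‖X j k‖ ≤ √C * ∑' n : ℤ, r ^ n.natAbs := fun X hX j =>
    calc ∑ k ∈ F, √‖X j k‖ ≤ ∑ k ∈ F, √C * r ^ (k - j).natAbs := sum_le_sum fun k _ => by
          refine (Real.sqrt_le_sqrt (hX j k)).trans_eq ?_
          rw [Real.sqrt_mul' _ (by positivity), ← Int.cast_sub, sqrt_rpow_neg_mul_abs zero_le_two]
      _ ≤ √C * ∑' n : ℤ, r ^ n.natAbs := by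
          rw [← mul_sum]
          gcongr
          exact sum_comp_sub_le_tsum hr (fun n => by positivity) F j
  refine norm_sum_le_of_sum_sqrt_norm_le T F hC'
    (fun j _ => hrow (fun j k => star (T j) * T k) (fun j k => ?_) j)
    (fun j _ => hrow (fun j k => T j * star (T k)) (fun j k => ?_) j)
  · exact (le_add_of_nonneg_right (norm_nonneg _)).trans (hT k j)
  · exact (le_add_of_nonneg_left (norm_nonneg _)).trans (hT k j)

/-- Cotlar–Stein almost orthogonality: if `‖T_{k'}* T_k‖ + ‖T_{k'} T_k*‖ ≤ C 2^{-ε|k-k'|}`,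
then all finite partial sums `∑_{k ∈ F} T_k` are bounded in operator norm by a constant
depending only on `C` and `ε`. -/
theorem cotlar_stein (C ε : ℝ) (hC : 0 ≤ C) (hε : 0 < ε) :
    ∃ C' : ℝ, 0 ≤ C' ∧
      ∀ (H : Type) [NormedAddCommGroup H] [InnerProductSpace ℂ H] [CompleteSpace H]
        (T : ℤ → H →L[ℂ] H),
        (∀ k k' : ℤ,
            ‖ContinuousLinearMap.adjoint (T k') ∘L T k‖ +
              ‖T k' ∘L ContinuousLinearMap.adjoint (T k)‖ ≤
            C * 2 ^ (-(ε * |(k : ℝ) - (k' : ℝ)|))) →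
        ∀ F : Finset ℤ, ‖∑ k ∈ F, T k‖ ≤ C' :=
  cotlar_stein_general C ε hε
end

section
/- Let $(X,\rho,\mu)$ be a $D$-regular space. Fix $\alpha$ with $(D-\eta)/2 < \alpha < D/2$. Let $\mathcal{Q}$ be disjoint dyadic cubes and for each $Q\in\mathcal{Q}$ a function $b^Q$ supported on $Q$ with $\int b^Q = 0$ and $\|b^Q\|_1\lesssim\mu(Q)$. Then $\int_{X\setminus E} \sum_k (S_k b)^2 \,d\mu \lesssim \sum_{Q\in\mathcal{Q}}\mu(Q)$, where $b=\sum_Q b^Q$, $E=\bigcup_Q CQ$, and $S_k$ is the nontangential short variation operator at scale $k$, assuming the single-scale reverse Hölder bound $(S_k b)^2(x) \lesssim \kappa^{-2kD}\sum_{Q:\,\mathrm{dist}(x,Q)\lesssim\kappa^k} (\kappa^k/\mathrm{diam}(Q))^{2\alpha}\|b^Q\|_1^2$ for $x\notin E$ and cubes of scale $\le k$. -/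
open MeasureTheory Metric ENNReal

/-!
Outside `E`, the reverse Hölder bound reduces `(S_k b)²` to a sum over cubes `Q` of scale
`m ≤ k` whose `CE κ^k`-neighbourhood contains `x`. Integrating over that neighbourhood (volume
`≲ κ^{kD}`) and using `‖b^Q‖₁² ≲ μ(Q)·κ^{mD}`, cube `Q` contributes `≲ μ(Q) κ^{(2α - D)(k - m)}`
at scale `k`. Since `α < D/2` this is a geometric series in `k - m`, so summing over `k ≥ m`
and then over the cubes gives `≲ ∑ μ(Q)`.
-/

lemma scale_factor_le {κ α D cd d : ℝ} (hκ : 0 < κ) (hα : 0 ≤ α) (hcd : 0 < cd) {m : ℤ} (n : ℕ)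
    (hd : cd * κ ^ m ≤ d) :
    κ ^ (-(2 * ((m + n : ℤ) : ℝ)) * D) * (κ ^ (m + n) / d) ^ (2 * α) * (κ ^ m) ^ D *
      (κ ^ (m + n)) ^ D ≤ (κ ^ (2 * α - D)) ^ n / cd ^ (2 * α) := by
  have hd0 : 0 < d := lt_of_lt_of_le (by positivity) hd
  have hratio : κ ^ (m + n) / d ≤ κ ^ n / cd := by
    rw [zpow_add₀ hκ.ne', zpow_natCast, div_le_div_iff₀ hd0 hcd]
    nlinarith [zpow_pos hκ m, pow_pos hκ n]
  have hexp : κ ^ (-(2 * ((m + n : ℤ) : ℝ)) * D) * κ ^ (n * (2 * α)) * κ ^ (m * D) *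
      κ ^ ((m + n : ℤ) * D) = κ ^ ((2 * α - D) * n) := by
    rw [← Real.rpow_add hκ, ← Real.rpow_add hκ, ← Real.rpow_add hκ]
    push_cast
    ring_nf
  calc κ ^ (-(2 * ((m + n : ℤ) : ℝ)) * D) * (κ ^ (m + n) / d) ^ (2 * α) * (κ ^ m) ^ D *
        (κ ^ (m + n)) ^ D
      ≤ κ ^ (-(2 * ((m + n : ℤ) : ℝ)) * D) * (κ ^ n / cd) ^ (2 * α) * (κ ^ m) ^ D *
        (κ ^ (m + n)) ^ D := by gcongr
    _ = (κ ^ (2 * α - D)) ^ n / cd ^ (2 * α) := by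
      rw [Real.div_rpow (by positivity) hcd.le, ← Real.rpow_intCast, ← Real.rpow_intCast,
        ← Real.rpow_natCast, ← Real.rpow_natCast, ← Real.rpow_mul hκ.le, ← Real.rpow_mul hκ.le,
        ← Real.rpow_mul hκ.le, ← Real.rpow_mul hκ.le, ← hexp]
      ring

lemma cube_scale_real_le {D α κ cd Cd Cb CE C₀ d : ℝ} (hκ : 0 < κ) (hα : 0 ≤ α) (hcd : 0 < cd)
    (hCd : 0 ≤ Cd) (hCE : 0 ≤ CE) (hC₀ : 0 ≤ C₀) {m : ℤ} (n : ℕ) (hd : cd * κ ^ m ≤ d) :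
    C₀ * κ ^ (-(2 * ((m + n : ℤ) : ℝ)) * D) * (κ ^ (m + n) / d) ^ (2 * α) *
      (Cb ^ 2 * (Cd * (2 * Cd * κ ^ m) ^ D)) * (Cd * ((CE + 2 * Cd) * κ ^ (m + n)) ^ D) ≤
      C₀ * Cb ^ 2 * (Cd * (2 * Cd) ^ D) * (Cd * (CE + 2 * Cd) ^ D) / cd ^ (2 * α) *
        (κ ^ (2 * α - D)) ^ n := by
  rw [Real.mul_rpow (x := 2 * Cd) (by positivity) (by positivity),
    Real.mul_rpow (x := CE + 2 * Cd) (by positivity) (by positivity)]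
  calc _ = C₀ * Cb ^ 2 * (Cd * (2 * Cd) ^ D) * (Cd * (CE + 2 * Cd) ^ D) *
        (κ ^ (-(2 * ((m + n : ℤ) : ℝ)) * D) * (κ ^ (m + n) / d) ^ (2 * α) * (κ ^ m) ^ D *
          (κ ^ (m + n)) ^ D) := by ring
    _ ≤ C₀ * Cb ^ 2 * (Cd * (2 * Cd) ^ D) * (Cd * (CE + 2 * Cd) ^ D) *
        ((κ ^ (2 * α - D)) ^ n / cd ^ (2 * α)) := by
      gcongr
      exact scale_factor_le hκ hα hcd n hd
    _ = _ := by ring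

lemma Metric.setOf_infDist_le_subset_ball {X : Type*} [MetricSpace X] {s : Set X} {z : X}
    {a R : ℝ} (hs : Bornology.IsBounded s) (hz : z ∈ s) (hR : a + diam s < R) :
    {x | infDist x s ≤ a} ⊆ ball z R := fun x hx =>
  (dist_le_infDist_add_diam hs hz).trans_lt (by linarith [hx.out])

lemma measure_setOf_infDist_le_le {X : Type*} [MetricSpace X] [MeasurableSpace X] {μ : Measure X}
    {Cd D : ℝ} (hμ : ∀ (x : X) (r : ℝ), 0 < r → μ (ball x r) ≤ ENNReal.ofReal (Cd * r ^ D))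
    {s : Set X} {z : X} {a R : ℝ} (hs : Bornology.IsBounded s) (hz : z ∈ s) (ha : 0 ≤ a)
    (hR : a + diam s < R) : μ {x | infDist x s ≤ a} ≤ ENNReal.ofReal (Cd * R ^ D) :=
  (measure_mono (setOf_infDist_le_subset_ball hs hz hR)).trans
    (hμ z R (by linarith [diam_nonneg (s := s)]))

lemma setLIntegral_le_tsum_mul_measure {X ι : Type*} [MeasurableSpace X] [Countable ι]
    {μ : Measure X} {s : Set X} {f : X → ℝ≥0∞} {B : ι → Set X} {c : ι → ℝ≥0∞} {K : ℝ≥0∞}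
    (hs : MeasurableSet s) (hB : ∀ i, MeasurableSet (B i))
    (hf : ∀ x ∈ s, f x ≤ K * ∑' i, {i | x ∈ B i}.indicator c i) :
    ∫⁻ x in s, f x ∂μ ≤ K * ∑' i, c i * μ (B i) := by
  have hmeas : ∀ i, Measurable ((B i).indicator fun _ => c i) :=
    fun i => measurable_const.indicator (hB i)
  calc ∫⁻ x in s, f x ∂μ ≤ ∫⁻ x in s, K * ∑' i, (B i).indicator (fun _ => c i) x ∂μ :=
        setLIntegral_mono' hs hf
    _ ≤ ∫⁻ x, K * ∑' i, (B i).indicator (fun _ => c i) x ∂μ := setLIntegral_le_lintegral _ _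
    _ = K * ∑' i, c i * μ (B i) := by
      rw [lintegral_const_mul _ (Measurable.tsum hmeas),
        lintegral_tsum fun i => (hmeas i).aemeasurable]
      simp_rw [lintegral_indicator_const (hB _)]

lemma ENNReal.tsum_int_le_of_le_geometric {f : ℤ → ℝ≥0∞} {m : ℤ} {a r : ℝ≥0∞}
    (hlt : ∀ k < m, f k = 0) (hge : ∀ n : ℕ, f (m + n) ≤ a * r ^ n) :
    ∑' k, f k ≤ a * (1 - r)⁻¹ := by
  have hsupp : Function.support f ⊆ Set.range fun n : ℕ => m + n := by
    intro k hk
    obtain ⟨n, rfl⟩ := Int.le.dest (not_lt.1 (mt (hlt k) hk))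
    exact ⟨n, rfl⟩
  rw [← (Function.Injective.tsum_eq (fun a b h => by simpa using h) hsupp), ← tsum_geometric,
    ← ENNReal.tsum_mul_left]
  exact ENNReal.tsum_le_tsum hge

lemma cube_scale_term_le {X : Type*} [MetricSpace X] [MeasurableSpace X] {μ : Measure X}
    {D α κ cd Cd Cb CE C₀ : ℝ}
    (hμ : ∀ (x : X) (r : ℝ), 0 < r → μ (ball x r) ≤ ENNReal.ofReal (Cd * r ^ D))
    (hκ : 1 ≤ κ) (hα : 0 ≤ α) (hcd : 0 < cd) (hCb : 0 ≤ Cb) (hCE : 0 ≤ CE) (hC₀ : 0 ≤ C₀)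
    {Q B : Set X} {z : X} {m : ℤ} {b : ℝ≥0∞} (n : ℕ) (hz : z ∈ Q)
    (hdiam : cd * κ ^ m ≤ diam Q ∧ diam Q ≤ Cd * κ ^ m) (hb : b ≤ ENNReal.ofReal Cb * μ Q)
    (hB : B ⊆ {x | infDist x Q ≤ CE * κ ^ (m + n)}) :
    ENNReal.ofReal C₀ * ENNReal.ofReal (κ ^ (-(2 * ((m + n : ℤ) : ℝ)) * D)) *
        (ENNReal.ofReal ((κ ^ (m + n) / diam Q) ^ (2 * α)) * b ^ 2 * μ B) ≤
      ENNReal.ofReal (C₀ * Cb ^ 2 * (Cd * (2 * Cd) ^ D) * (Cd * (CE + 2 * Cd) ^ D) / cd ^ (2 * α)) *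
        μ Q * ENNReal.ofReal (κ ^ (2 * α - D)) ^ n := by
  have hκ₀ : 0 < κ := zero_lt_one.trans_le hκ
  have hκm : 0 < κ ^ m := zpow_pos hκ₀ m
  have hκmn : κ ^ m ≤ κ ^ (m + n) := zpow_le_zpow_right₀ hκ (by omega)
  have hdiam_pos : 0 < diam Q := lt_of_lt_of_le (by positivity) hdiam.1
  have hCd : 0 < Cd := (mul_pos_iff_of_pos_right hκm).1 (hdiam_pos.trans_le hdiam.2)
  have hQ : Bornology.IsBounded Q := not_not.1 (mt diam_eq_zero_of_unbounded hdiam_pos.ne')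
  have hμQ : μ Q ≤ ENNReal.ofReal (Cd * (2 * Cd * κ ^ m) ^ D) :=
    (measure_mono fun x hx => (infDist_zero_of_mem hx).le).trans
      (measure_setOf_infDist_le_le hμ hQ hz le_rfl (by nlinarith [hdiam.2]))
  have hμB : μ B ≤ ENNReal.ofReal (Cd * ((CE + 2 * Cd) * κ ^ (m + n)) ^ D) :=
    (measure_mono hB).trans (measure_setOf_infDist_le_le hμ hQ hz (by positivity)
      (by nlinarith [hdiam.2]))
  have hb2 : b ^ 2 ≤ ENNReal.ofReal (Cb ^ 2 * (Cd * (2 * Cd * κ ^ m) ^ D)) * μ Q :=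
    calc b ^ 2 ≤ ENNReal.ofReal Cb ^ 2 * μ Q * μ Q := by rw [mul_assoc, ← sq, ← mul_pow]; gcongr
      _ ≤ ENNReal.ofReal Cb ^ 2 * ENNReal.ofReal (Cd * (2 * Cd * κ ^ m) ^ D) * μ Q := by gcongr
      _ = _ := by rw [ENNReal.ofReal_mul (p := Cb ^ 2) (by positivity), ENNReal.ofReal_pow hCb]
  calc _ ≤ ENNReal.ofReal C₀ * ENNReal.ofReal (κ ^ (-(2 * ((m + n : ℤ) : ℝ)) * D)) *
        (ENNReal.ofReal ((κ ^ (m + n) / diam Q) ^ (2 * α)) *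
          (ENNReal.ofReal (Cb ^ 2 * (Cd * (2 * Cd * κ ^ m) ^ D)) * μ Q) *
          ENNReal.ofReal (Cd * ((CE + 2 * Cd) * κ ^ (m + n)) ^ D)) := by gcongr
    _ = ENNReal.ofReal C₀ * ENNReal.ofReal (κ ^ (-(2 * ((m + n : ℤ) : ℝ)) * D)) *
        ENNReal.ofReal ((κ ^ (m + n) / diam Q) ^ (2 * α)) *
        ENNReal.ofReal (Cb ^ 2 * (Cd * (2 * Cd * κ ^ m) ^ D)) *
        ENNReal.ofReal (Cd * ((CE + 2 * Cd) * κ ^ (m + n)) ^ D) * μ Q := by ring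
    _ ≤ _ := by
      rw [← ENNReal.ofReal_mul hC₀, ← ENNReal.ofReal_mul (by positivity),
        ← ENNReal.ofReal_mul (by positivity), ← ENNReal.ofReal_mul (by positivity),
        mul_right_comm _ (μ Q), ← ENNReal.ofReal_pow (by positivity),
        ← ENNReal.ofReal_mul (by positivity)]
      gcongr ENNReal.ofReal ?_ * _
      exact cube_scale_real_le hκ₀ hα hcd hCd.le hCE hC₀ n hdiam.1

theorem short_variation_weak11_core_general {X : Type*} [MetricSpace X] [MeasurableSpace X]
    [BorelSpace X] (μ : Measure X) (D η α κ cd Cd Cb CE C₀ : ℝ)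
    (hκ : 1 < κ) (hηD : η ≤ D)
    (hα₁ : (D - η) / 2 < α) (hα₂ : α < D / 2)
    (hcd : 0 < cd) (hCb : 0 < Cb) (hCE : 1 ≤ CE) (hC₀ : 0 ≤ C₀)
    (hreg_upper : ∀ (x : X) (r : ℝ), 0 < r →
      μ (Metric.ball x r) ≤ ENNReal.ofReal (Cd * r ^ D)) :
    ∃ C' : ℝ≥0∞, C' ≠ ⊤ ∧
      ∀ (ι : Type) [Countable ι] (Q : ι → Set X) (kQ : ι → ℤ) (z : ι → X)
        (normb : ι → ℝ≥0∞) (S : ℤ → X → ℝ≥0∞),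
        Pairwise (Function.onFun Disjoint Q) →
        (∀ i, MeasurableSet (Q i)) →
        (∀ i, z i ∈ Q i) →
        (∀ i, cd * κ ^ kQ i ≤ Metric.diam (Q i) ∧ Metric.diam (Q i) ≤ Cd * κ ^ kQ i) →
        (∀ i, normb i ≤ ENNReal.ofReal Cb * μ (Q i)) →
        (∀ k, Measurable (S k)) →
        (∀ (k : ℤ) (x : X), x ∉ (⋃ i, Metric.ball (z i) (CE * κ ^ kQ i)) →
          S k x ^ 2 ≤ ENNReal.ofReal C₀ * ENNReal.ofReal (κ ^ (-(2 * (k : ℝ)) * D)) *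
            ∑' i, Set.indicator
              {i' : ι | kQ i' ≤ k ∧ Metric.infDist x (Q i') ≤ CE * κ ^ k}
              (fun i' => ENNReal.ofReal ((κ ^ k / Metric.diam (Q i')) ^ (2 * α)) *
                normb i' ^ 2) i) →
        ∫⁻ x in (⋃ i, Metric.ball (z i) (CE * κ ^ kQ i))ᶜ, ∑' k : ℤ, S k x ^ 2 ∂μ ≤
          C' * ∑' i, μ (Q i) := by
  have hα : 0 ≤ α := by linarith
  set A : ℝ := C₀ * Cb ^ 2 * (Cd * (2 * Cd) ^ D) * (Cd * (CE + 2 * Cd) ^ D) / cd ^ (2 * α)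
  set r : ℝ≥0∞ := ENNReal.ofReal (κ ^ (2 * α - D))
  have hr : r < 1 := ENNReal.ofReal_lt_one.2 (Real.rpow_lt_one_of_one_lt_of_neg hκ (by linarith))
  refine ⟨ENNReal.ofReal A * (1 - r)⁻¹,
    mul_ne_top ofReal_ne_top (inv_ne_top.2 (tsub_pos_of_lt hr).ne'), ?_⟩
  intro ι _ Q kQ z normb S _ _ hz hdiam hnormb hS hbound
  have hB : ∀ k i, MeasurableSet {x | kQ i ≤ k ∧ infDist x (Q i) ≤ CE * κ ^ k} := fun k i =>
    (MeasurableSet.const _).inter (measurableSet_le measurable_infDist measurable_const)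
  calc ∫⁻ x in _, ∑' k : ℤ, S k x ^ 2 ∂μ = ∑' k : ℤ, ∫⁻ x in _, S k x ^ 2 ∂μ :=
        lintegral_tsum fun k => ((hS k).pow_const 2).aemeasurable
    _ ≤ ∑' (k : ℤ) (i : ι), ENNReal.ofReal C₀ * ENNReal.ofReal (κ ^ (-(2 * (k : ℝ)) * D)) *
          (ENNReal.ofReal ((κ ^ k / diam (Q i)) ^ (2 * α)) * normb i ^ 2 *
            μ {x | kQ i ≤ k ∧ infDist x (Q i) ≤ CE * κ ^ k}) := by
      refine ENNReal.tsum_le_tsum fun k => ?_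
      rw [ENNReal.tsum_mul_left]
      exact setLIntegral_le_tsum_mul_measure
        (MeasurableSet.iUnion fun i => measurableSet_ball).compl (hB k) (hbound k)
    _ = ∑' (i : ι) (k : ℤ), ENNReal.ofReal C₀ * ENNReal.ofReal (κ ^ (-(2 * (k : ℝ)) * D)) *
          (ENNReal.ofReal ((κ ^ k / diam (Q i)) ^ (2 * α)) * normb i ^ 2 *
            μ {x | kQ i ≤ k ∧ infDist x (Q i) ≤ CE * κ ^ k}) := ENNReal.tsum_comm
    _ ≤ ∑' i, ENNReal.ofReal A * μ (Q i) * (1 - r)⁻¹ :=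
      ENNReal.tsum_le_tsum fun i => ENNReal.tsum_int_le_of_le_geometric
        (fun k hk => by simp [not_le.2 hk])
        (fun n => cube_scale_term_le hreg_upper hκ.le hα hcd hCb.le (by linarith) hC₀ n (hz i)
          (hdiam i) (hnormb i) fun _ hx => hx.2)
    _ = _ := by rw [ENNReal.tsum_mul_right, ENNReal.tsum_mul_left]; ring

/-- Weak (1,1) core estimate for the short variation square function: given disjoint
Calderón–Zygmund cubes `Q_i` of scales `κ^{kQ i}` with bad functions of mass
`normb i ≲ μ(Q_i)`, and a family of operators `S_k` satisfying the single-scale reverse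
Hölder bound (with exponent `(D-η)/2 < α < D/2`) outside the exceptional set
`E = ⋃ C·Q_i`, one has `∫_{X∖E} ∑_k (S_k b)² dμ ≲ ∑_i μ(Q_i)`. -/
theorem short_variation_weak11_core {X : Type*} [MetricSpace X] [MeasurableSpace X]
    [BorelSpace X] (μ : Measure X) (D η α κ cd Cd Cb CE C₀ : ℝ)
    (hκ : 1 < κ) (hD : 0 < D) (hη : 0 < η) (hηD : η ≤ D)
    (hα₁ : (D - η) / 2 < α) (hα₂ : α < D / 2)
    (hcd : 0 < cd) (hCd : cd ≤ Cd) (hCb : 0 < Cb) (hCE : 1 ≤ CE) (hC₀ : 0 ≤ C₀)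
    (hreg_lower : ∀ (x : X) (r : ℝ), 0 < r →
      ENNReal.ofReal ((1 / Cd) * r ^ D) ≤ μ (Metric.ball x r))
    (hreg_upper : ∀ (x : X) (r : ℝ), 0 < r →
      μ (Metric.ball x r) ≤ ENNReal.ofReal (Cd * r ^ D)) :
    ∃ C' : ℝ≥0∞, C' ≠ ⊤ ∧
      ∀ (ι : Type) [Countable ι] (Q : ι → Set X) (kQ : ι → ℤ) (z : ι → X)
        (normb : ι → ℝ≥0∞) (S : ℤ → X → ℝ≥0∞),
        Pairwise (Function.onFun Disjoint Q) →
        (∀ i, MeasurableSet (Q i)) →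
        (∀ i, z i ∈ Q i) →
        (∀ i, cd * κ ^ kQ i ≤ Metric.diam (Q i) ∧ Metric.diam (Q i) ≤ Cd * κ ^ kQ i) →
        (∀ i, normb i ≤ ENNReal.ofReal Cb * μ (Q i)) →
        (∀ k, Measurable (S k)) →
        (∀ (k : ℤ) (x : X), x ∉ (⋃ i, Metric.ball (z i) (CE * κ ^ kQ i)) →
          S k x ^ 2 ≤ ENNReal.ofReal C₀ * ENNReal.ofReal (κ ^ (-(2 * (k : ℝ)) * D)) *
            ∑' i, Set.indicator
              {i' : ι | kQ i' ≤ k ∧ Metric.infDist x (Q i') ≤ CE * κ ^ k}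
              (fun i' => ENNReal.ofReal ((κ ^ k / Metric.diam (Q i')) ^ (2 * α)) *
                normb i' ^ 2) i) →
        ∫⁻ x in (⋃ i, Metric.ball (z i) (CE * κ ^ kQ i))ᶜ, ∑' k : ℤ, S k x ^ 2 ∂μ ≤
          C' * ∑' i, μ (Q i) :=
  short_variation_weak11_core_general μ D η α κ cd Cd Cb CE C₀ hκ hηD hα₁ hα₂ hcd hCb hCE hC₀
    hreg_upper
end

section
/- Let $(\mathbb{E}_k)_{k}$ be conditional expectations of a dyadic filtration, $f\in L^2$, $\lambda>0$, and define greedy stopping times: $l_0 \equiv k_{\max}$ and $l_{j+1}(x)$ is the largest $l < l_j(x)$ with $|(\mathbb{E}_{l}-\mathbb{E}_{l_j(x)})f(x)| > \lambda/8$ (if any). Then the $\lambda/2$-jump counting function of $k\mapsto \mathbb{E}_k f(x)$ on $[k_0, k_{\max}]$ satisfies $\lambda^2 N_{\lambda/2}(\mathbb{E}_k f(x): k_0\le k\le k_{\max}) \lesssim \sum_j |(\mathbb{E}_{l_{j+1}(x)}-\mathbb{E}_{l_j(x)})f(x)|^2$. -/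
open ENNReal

/-- The `μ`-jump counting function of a family `(a_k)` restricted to an index set `S`. -/
noncomputable def jumpCountOn {I : Type*} [LinearOrder I] {E : Type*}
    [SeminormedAddCommGroup E] (lam : ℝ) (a : I → E) (S : Set I) : ℝ≥0∞ :=
  ⨆ (J : ℕ) (_ : ∃ t : ℕ → I, (∀ i < J, t i < t (i + 1)) ∧ (∀ i ≤ J, t i ∈ S) ∧
      ∀ i < J, lam < ‖a (t (i + 1)) - a (t i)‖), (J : ℝ≥0∞)

/-- Lépingle-type greedy stopping time bound: if `(l_j)_{j ≤ J}` are the greedy stopping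
times with jump size `λ/8` for the (martingale) sequence `b : ℤ → ℂ` on `[k₀, k_max]`
(starting at `l₀ = k_max`, each `l_{j+1}` the largest index below `l_j` with
`|b(l_{j+1}) - b(l_j)| > λ/8`, and no further jump below `l_J`), then the `λ/2`-jump
counting function of `k ↦ b k` on `[k₀, k_max]` satisfies
`λ² N_{λ/2} ≲ ∑_j |b(l_{j+1}) - b(l_j)|²` with an absolute constant. -/
theorem greedy_stopping_jump_bound :
    ∃ C : ℝ≥0∞, C ≠ ⊤ ∧
      ∀ (b : ℤ → ℂ) (lam : ℝ) (k₀ kmax : ℤ) (J : ℕ) (l : ℕ → ℤ),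
        0 < lam → k₀ ≤ kmax →
        l 0 = kmax →
        (∀ j ≤ J, k₀ ≤ l j ∧ l j ≤ kmax) →
        (∀ j < J, l (j + 1) < l j ∧ lam / 8 < ‖b (l (j + 1)) - b (l j)‖ ∧
          ∀ m : ℤ, l (j + 1) < m → m < l j → ‖b m - b (l j)‖ ≤ lam / 8) →
        (∀ m : ℤ, k₀ ≤ m → m < l J → ‖b m - b (l J)‖ ≤ lam / 8) →
        ENNReal.ofReal (lam ^ 2) * jumpCountOn (lam / 2) b (Set.Icc k₀ kmax) ≤
          C * ENNReal.ofReal (∑ j ∈ Finset.range J, ‖b (l (j + 1)) - b (l j)‖ ^ 2) := by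
  refine ⟨64, by norm_num, ?_⟩
  intro b lam k₀ kmax J l hlam hk hl0 hrange hstep hJ
  -- interval index function
  set φ : ℤ → ℕ := fun m => Nat.findGreatest (fun j => m ≤ l j) J with hφ
  have hφspec : ∀ m, m ≤ kmax → m ≤ l (φ m) := by
    intro m hm
    exact Nat.findGreatest_spec (P := fun j => m ≤ l j) (Nat.zero_le J) (show m ≤ l 0 from hl0 ▸ hm)
  have hφle : ∀ m, φ m ≤ J := fun m => Nat.findGreatest_le J
  have hφanti : ∀ m m' : ℤ, m ≤ m' → φ m' ≤ φ m := by
    intro m m' h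
    exact Nat.findGreatest_mono (fun j hj => le_trans h hj) le_rfl
  -- key: within an interval, close to b (l (φ m))
  have key : ∀ m : ℤ, k₀ ≤ m → m ≤ kmax → ‖b m - b (l (φ m))‖ ≤ lam / 8 := by
    intro m hm1 hm2
    rcases eq_or_lt_of_le (hφspec m hm2) with heq | hlt
    · have h0 : ‖b m - b (l (φ m))‖ = 0 := by rw [← heq]; simp
      rw [h0]; positivity
    rcases eq_or_lt_of_le (hφle m) with hJeq | hJlt
    · rw [hJeq] at hlt ⊢
      exact hJ m hm1 hlt
    · have hnot : ¬ (m ≤ l (φ m + 1)) :=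
        Nat.findGreatest_is_greatest (Nat.lt_succ_self _) hJlt
      push_neg at hnot
      exact (hstep (φ m) hJlt).2.2 m hnot hlt
  -- claim 1: same interval → difference ≤ lam/4
  have claim1 : ∀ m m' : ℤ, k₀ ≤ m → m ≤ kmax → k₀ ≤ m' → m' ≤ kmax → φ m = φ m' →
      ‖b m - b m'‖ ≤ lam / 4 := by
    intro m m' h1 h2 h3 h4 he
    have : b m - b m' = (b m - b (l (φ m))) - (b m' - b (l (φ m'))) := by
      rw [he]; ring
    rw [this]
    calc ‖(b m - b (l (φ m))) - (b m' - b (l (φ m')))‖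
        ≤ ‖b m - b (l (φ m))‖ + ‖b m' - b (l (φ m'))‖ := norm_sub_le _ _
      _ ≤ lam / 8 + lam / 8 := add_le_add (key m h1 h2) (key m' h3 h4)
      _ = lam / 4 := by ring
  -- bound the jump count by J
  have hN : jumpCountOn (lam / 2) b (Set.Icc k₀ kmax) ≤ (J : ℝ≥0∞) := by
    rw [jumpCountOn]
    refine iSup₂_le fun M hM => ?_
    obtain ⟨t, ht1, ht2, ht3⟩ := hM
    have hdec : ∀ i < M, φ (t (i + 1)) < φ (t i) := by
      intro i hi
      have hle : φ (t (i + 1)) ≤ φ (t i) := hφanti _ _ (le_of_lt (ht1 i hi))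
      rcases eq_or_lt_of_le hle with heq | h
      · exfalso
        have h1 := ht2 i (le_of_lt hi)
        have h2 := ht2 (i + 1) hi
        have := claim1 (t (i + 1)) (t i) h2.1 h2.2 h1.1 h1.2 heq
        have := ht3 i hi
        linarith
      · exact h
    have hind : ∀ i ≤ M, i + φ (t i) ≤ φ (t 0) := by
      intro i hi
      induction i with
      | zero => simp
      | succ n ih =>
          have h1 : n + 1 + φ (t (n + 1)) ≤ n + φ (t n) := by
            have := hdec n hi
            omega
          exact le_trans h1 (ih (le_of_lt hi))
    have : M ≤ J := by
      have := hind M le_rfl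
      have := hφle (t 0)
      omega
    exact_mod_cast this
  -- arithmetic
  have hsum : (J : ℝ) * (lam ^ 2) ≤ 64 * ∑ j ∈ Finset.range J, ‖b (l (j + 1)) - b (l j)‖ ^ 2 := by
    have hterm : ∀ j ∈ Finset.range J, lam ^ 2 / 64 ≤ ‖b (l (j + 1)) - b (l j)‖ ^ 2 := by
      intro j hj
      have h := (hstep j (Finset.mem_range.mp hj)).2.1
      have h8 : 0 ≤ lam / 8 := by positivity
      nlinarith [norm_nonneg (b (l (j + 1)) - b (l j))]
    have := Finset.sum_le_sum hterm
    simp only [Finset.sum_const, Finset.card_range, nsmul_eq_mul] at this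
    nlinarith [this]
  calc ENNReal.ofReal (lam ^ 2) * jumpCountOn (lam / 2) b (Set.Icc k₀ kmax)
      ≤ ENNReal.ofReal (lam ^ 2) * (J : ℝ≥0∞) := by gcongr
    _ = ENNReal.ofReal ((J : ℝ) * lam ^ 2) := by
        rw [ENNReal.ofReal_mul (by positivity), ENNReal.ofReal_natCast, mul_comm]
    _ ≤ ENNReal.ofReal (64 * ∑ j ∈ Finset.range J, ‖b (l (j + 1)) - b (l j)‖ ^ 2) :=
        ENNReal.ofReal_le_ofReal hsum
    _ = 64 * ENNReal.ofReal (∑ j ∈ Finset.range J, ‖b (l (j + 1)) - b (l j)‖ ^ 2) := by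
        rw [ENNReal.ofReal_mul (by norm_num)]
        norm_num
end
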